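/- arXiv:1804.02874 — 3 statements merged into one kernel-verified Lean document; each statement's English description precedes it below -/
import Mathlib

section
/- Let G be a compact Hausdorff topological group and φ : G → G a continuous endomorphism. If the number of Reidemeister classes of φ is finite, then each Reidemeister class is both closed and open in G. -/
/-- The Reidemeister (twisted conjugacy) class of `g` for an endomorphism `φ`. -/
def ReidClass {G : Type*} [Group G] (φ : G →* G) (g : G) : Set G :=
  {h | ∃ x : G, h = x * g * (φ x)⁻¹}

/-! Each Reidemeister class is the continuous image of the compact group `G`, hence closed.
The classes partition `G`, so the complement of one class is the union of the finitely many
others, which is closed as well. -/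

open Set

theorem isOpen_of_finite_closed_partition {X : Type*} [TopologicalSpace X] {f : X → Set X}
    (mem_self : ∀ x, x ∈ f x) (eq_of_mem : ∀ {x y}, y ∈ f x → f y = f x)
    (hfin : (range f).Finite) (hclosed : ∀ x, IsClosed (f x)) (x : X) : IsOpen (f x) := by
  have hcompl : (f x)ᶜ = ⋃ S ∈ f '' (f x)ᶜ, S := by
    rw [biUnion_image]
    refine Subset.antisymm (fun y hy ↦ mem_biUnion hy (mem_self y)) ?_
    simp only [iUnion_subset_iff]
    intro y hy z hz hzx
    have hyz := mem_self y
    rw [← eq_of_mem hz, eq_of_mem hzx] at hyz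
    exact hy hyz
  rw [← isClosed_compl_iff, hcompl]
  exact (hfin.subset (image_subset_range _ _)).isClosed_biUnion
    (forall_mem_image.2 fun y _ ↦ hclosed y)

section ReidClass

variable {G : Type*} [Group G] (φ : G →* G)

theorem reidClass_eq_range (g : G) : ReidClass φ g = range fun x ↦ x * g * (φ x)⁻¹ := by
  ext h
  simp [ReidClass, eq_comm]

theorem mem_reidClass_self (g : G) : g ∈ ReidClass φ g := ⟨1, by simp⟩

theorem reidClass_eq_of_mem {g h : G} (hh : h ∈ ReidClass φ g) :
    ReidClass φ h = ReidClass φ g := by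
  obtain ⟨x, rfl⟩ := hh
  ext y
  constructor
  · rintro ⟨z, rfl⟩
    exact ⟨z * x, by simp [mul_assoc]⟩
  · rintro ⟨z, rfl⟩
    exact ⟨z * x⁻¹, by simp [mul_assoc]⟩

theorem isCompact_reidClass [TopologicalSpace G] [IsTopologicalGroup G] [CompactSpace G]
    (hφ : Continuous φ) (g : G) : IsCompact (ReidClass φ g) := by
  rw [reidClass_eq_range]
  exact isCompact_range (by fun_prop)

end ReidClass

theorem reidClass_isClopen_of_finite
    {G : Type*} [Group G] [TopologicalSpace G] [IsTopologicalGroup G]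
    [CompactSpace G] [T2Space G]
    (φ : G →* G) (hφ : Continuous φ)
    (hfin : (Set.range (ReidClass φ)).Finite) :
    ∀ g : G, IsClopen (ReidClass φ g) := by
  have hclosed (g : G) : IsClosed (ReidClass φ g) := (isCompact_reidClass φ hφ g).isClosed
  exact fun g ↦ ⟨hclosed g, isOpen_of_finite_closed_partition (mem_reidClass_self φ)
    (reidClass_eq_of_mem φ) hfin hclosed g⟩
end

section
/- Let F be a finite group, φ : F → F an endomorphism, and B the linear operator f ↦ f ∘ φ on the space of complex class functions on F. Then the Reidemeister zeta function R_φ(z) = exp(∑_{n≥1} R(φⁿ) zⁿ/n) equals 1/det(1 − Bz); in particular it is rational. -/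
/-- The space of complex class functions on a group `F`. -/
noncomputable def classFunctions (F : Type*) [Group F] : Submodule ℂ (F → ℂ) where
  carrier := {f | ∀ g x : F, f (x * g * x⁻¹) = f g}
  add_mem' := by
    intro f₁ f₂ h₁ h₂ g x
    simp only [Pi.add_apply, h₁ g x, h₂ g x]
  zero_mem' := by intro g x; rfl
  smul_mem' := by
    intro c f hf g x
    simp only [Pi.smul_apply, hf g x]

/-- The operator `f ↦ f ∘ φ` on class functions, induced by an endomorphism `φ`. -/
noncomputable def classFunMap {F : Type*} [Group F] (φ : F →* F) :
    classFunctions F →ₗ[ℂ] classFunctions F where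
  toFun f := ⟨fun g => f.1 (φ g), by
    intro g x
    have := f.2 (φ g) (φ x)
    simpa [map_mul, map_inv] using this⟩
  map_add' := by intros; rfl
  map_smul' := by intros; rfl

/-- The number of twisted conjugacy classes of `ψ : F → F`. -/
noncomputable def reidNum {F : Type*} [Group F] (ψ : F → F) : ℕ :=
  Nat.card (Set.range fun g : F => {h : F | ∃ x : F, h = x * g * (ψ x)⁻¹})

/-!
By the twisted Burnside–Frobenius theorem, `R(ψ)` is the number of conjugacy classes fixed by
`ψ`: Burnside's lemma for the action `x • g = x * g * (ψ x)⁻¹` gives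
`R(ψ) |F| = ∑ₓ #{g | g⁻¹ x g = ψ x}`, and the summand is `|C(x)| = |F| / |class of x|` when
`ψ x` is conjugate to `x` and `0` otherwise. Hence `R_φ` is the Artin–Mazur zeta function
`exp (∑ #Fix(σⁿ) zⁿ / n)` of the map `σ` induced by `φ` on the finite set of conjugacy classes,
while `B` is conjugate to `f ↦ f ∘ σ`, whose matrix `P_σ` has entries `[σ i = j]`.

For a self-map `σ` of a finite set, `ζ_σ(z) · det (1 - z P_σ) = 1` by induction on the size of
the set: restricting `σ` to its image changes neither factor, and when `σ` is a permutation both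
factors are multiplicative over the splitting into one cycle and its complement. For a cycle of
length `k`, `#Fix(σⁿ) = k [k ∣ n]` and `det (1 - z P_σ) = 1 - zᵏ`, so
`log ζ_σ(z) = ∑ₘ zᵏᵐ / m = -log (1 - zᵏ)`.
-/

open Function Set Complex

section TwistedBurnside

variable {F : Type*} [Group F]

def TwistedConj (_ψ : F →* F) : Type _ := F

instance (ψ : F →* F) : MulAction F (TwistedConj ψ) where
  smul x g := x * @id F g * (ψ x)⁻¹
  one_smul g := show 1 * @id F g * (ψ 1)⁻¹ = g by simp; rfl
  mul_smul x y g :=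
    show x * y * @id F g * (ψ (x * y))⁻¹ = x * (y * @id F g * (ψ y)⁻¹) * (ψ x)⁻¹ by
      simp only [map_mul, mul_inv_rev, mul_assoc]

lemma reidNum_eq_card_orbits (ψ : F →* F) :
    reidNum ψ = Nat.card (MulAction.orbitRel.Quotient F (TwistedConj ψ)) := by
  rw [reidNum, Nat.card_congr (Setoid.quotientEquivClasses _)]
  congr! 2
  ext s
  refine exists_congr fun g => ?_
  rw [eq_comm]
  exact Eq.congr_right (Set.ext fun h => exists_congr fun x => eq_comm)

lemma card_orbits_mul_card_eq_sum [Fintype F] (ψ : F →* F) :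
    Nat.card (MulAction.orbitRel.Quotient F (TwistedConj ψ)) * Nat.card F =
      ∑ x : F, Nat.card {g : F // x * g * (ψ x)⁻¹ = g} := by
  classical
  have : Fintype (TwistedConj ψ) := inferInstanceAs (Fintype F)
  have := Fintype.ofFinite (MulAction.orbitRel.Quotient F (TwistedConj ψ))
  rw [Nat.card_eq_fintype_card, Nat.card_eq_fintype_card,
    ← MulAction.sum_card_fixedBy_eq_card_orbits_mul_card_group]
  refine Finset.sum_congr rfl fun x _ => ?_
  rw [← Nat.card_eq_fintype_card]
  rfl

lemma card_twistedFixedBy_of_isConj {ψ : F →* F} {x : F} (h : IsConj (ψ x) x) :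
    Nat.card {g : F // x * g * (ψ x)⁻¹ = g} =
      Nat.card (MulAction.stabilizer (ConjAct F) x) := by
  obtain ⟨c, hc⟩ := isConj_iff.mp h
  have hψ : ψ x = c⁻¹ * x * c := by
    calc ψ x = c⁻¹ * (c * ψ x * c⁻¹) * c := by group
      _ = c⁻¹ * x * c := by rw [hc]
  refine Nat.card_congr ((Equiv.mulRight c⁻¹).trans ConjAct.toConjAct.toEquiv |>.subtypeEquiv
    fun g => ?_)
  simp only [Equiv.trans_apply, Equiv.coe_mulRight, MulEquiv.toEquiv_eq_coe,
    MulEquiv.coe_toEquiv, MulAction.mem_stabilizer_iff, ConjAct.toConjAct_smul, hψ]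
  rw [mul_inv_eq_iff_eq_mul, mul_inv_eq_iff_eq_mul, ← mul_left_inj c⁻¹]
  simp only [mul_assoc, mul_inv_cancel, mul_one]
  exact eq_comm

lemma card_twistedFixedBy_of_not_isConj {ψ : F →* F} {x : F} (h : ¬ IsConj (ψ x) x) :
    Nat.card {g : F // x * g * (ψ x)⁻¹ = g} = 0 := by
  have : IsEmpty {g : F // x * g * (ψ x)⁻¹ = g} := ⟨fun g => h <| isConj_iff.mpr
    ⟨g.1, by rw [mul_inv_eq_iff_eq_mul]; exact (mul_inv_eq_iff_eq_mul.mp g.2).symm⟩⟩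
  exact Nat.card_of_isEmpty

lemma card_stabilizer_mul_ncard_carrier [Finite F] (x : F) :
    Nat.card (MulAction.stabilizer (ConjAct F) x) * (ConjClasses.mk x).carrier.ncard =
      Nat.card F := by
  rw [← ConjAct.orbit_eq_carrier_conjClasses, ← MulAction.index_stabilizer,
    Subgroup.card_mul_index]
  rfl

lemma sum_card_stabilizer_of_mk_eq [Fintype F] [DecidableEq (ConjClasses F)]
    (c : ConjClasses F) :
    ∑ x with ConjClasses.mk x = c, Nat.card (MulAction.stabilizer (ConjAct F) x) =
      Nat.card F := by
  have hc : c.carrier.ncard = (Finset.univ.filter (ConjClasses.mk · = c)).card := by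
    rw [← Set.ncard_coe_finset]
    congr 1
    ext x
    simp [ConjClasses.mem_carrier_iff_mk_eq]
  have hpos : 0 < c.carrier.ncard := by
    obtain ⟨x, rfl⟩ := ConjClasses.mk_surjective c
    exact (Set.ncard_pos (Set.toFinite _)).mpr ⟨x, ConjClasses.mem_carrier_mk⟩
  refine Nat.eq_of_mul_eq_mul_right hpos ?_
  rw [Finset.sum_mul, Finset.sum_congr rfl fun x hx => (Finset.mem_filter.mp hx).2 ▸
    card_stabilizer_mul_ncard_carrier x, Finset.sum_const, smul_eq_mul, hc, mul_comm]

lemma sum_card_twistedFixedBy_of_mk_eq [Fintype F] [DecidableEq (ConjClasses F)]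
    (ψ : F →* F) (c : ConjClasses F) :
    ∑ x with ConjClasses.mk x = c, Nat.card {g : F // x * g * (ψ x)⁻¹ = g} =
      if ConjClasses.map ψ c = c then Nat.card F else 0 := by
  have hconj (x : F) : IsConj (ψ x) x ↔ ConjClasses.map ψ (.mk x) = .mk x :=
    ConjClasses.mk_eq_mk_iff_isConj.symm
  split_ifs with hfix
  · rw [← sum_card_stabilizer_of_mk_eq c]
    refine Finset.sum_congr rfl fun x hx => card_twistedFixedBy_of_isConj ?_
    rw [hconj, (Finset.mem_filter.mp hx).2, hfix]
  · refine Finset.sum_eq_zero fun x hx => card_twistedFixedBy_of_not_isConj ?_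
    rwa [hconj, (Finset.mem_filter.mp hx).2]

theorem reidNum_eq_ncard_fixedPoints_map [Finite F] (ψ : F →* F) :
    reidNum ψ = (fixedPoints (ConjClasses.map ψ)).ncard := by
  classical
  have := Fintype.ofFinite F
  have := Fintype.ofFinite (ConjClasses F)
  refine Nat.eq_of_mul_eq_mul_right (Nat.card_pos (α := F)) ?_
  rw [reidNum_eq_card_orbits, card_orbits_mul_card_eq_sum,
    ← Finset.sum_fiberwise Finset.univ ConjClasses.mk,
    Finset.sum_congr rfl fun c _ => sum_card_twistedFixedBy_of_mk_eq ψ c, Finset.sum_ite,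
    Finset.sum_const_zero, add_zero, Finset.sum_const, smul_eq_mul, ← Set.ncard_coe_finset]
  congr 2
  ext c
  simp [IsFixedPt]

lemma reidNum_iterate [Finite F] (φ : F →* F) (n : ℕ) :
    reidNum (⇑φ)^[n] = (fixedPoints (ConjClasses.map φ)^[n]).ncard := by
  let ψ : F →* F := (show Monoid.End F from φ) ^ n
  have hψ : (⇑φ)^[n] = ⇑ψ := (Monoid.End.coe_pow F _ n).symm
  have hmap : ConjClasses.map ψ = (ConjClasses.map φ)^[n] := by
    funext c
    obtain ⟨x, rfl⟩ := ConjClasses.mk_surjective c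
    exact Semiconj.iterate_right (f := ConjClasses.mk) (ga := φ) (gb := ConjClasses.map φ)
      (fun _ => rfl) n x
  rw [hψ, reidNum_eq_ncard_fixedPoints_map, hmap]

end TwistedBurnside

section FixedPoints

variable {S T : Type*}

lemma ncard_fixedPoints_iterate_restrict {σ : S → S} {s : Set S} (hs : MapsTo σ s s) (n : ℕ) :
    (fixedPoints (hs.restrict σ s s)^[n]).ncard = (fixedPoints σ^[n] ∩ s).ncard := by
  rw [← ncard_image_of_injective _ Subtype.val_injective]
  congr 1
  ext x
  simp [IsFixedPt, hs.iterate_restrict, Subtype.ext_iff, and_comm]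

lemma ncard_fixedPoints_iterate_of_semiconj {σ : S → S} {τ : T → T} (e : T ≃ S)
    (h : Semiconj e τ σ) (n : ℕ) :
    (fixedPoints σ^[n]).ncard = (fixedPoints τ^[n]).ncard := by
  rw [← ncard_image_of_injective _ e.injective]
  congr 1
  ext x
  obtain ⟨y, rfl⟩ := e.surjective x
  simp only [mem_fixedPoints, IsFixedPt, e.injective.mem_set_image]
  rw [← (h.iterate_right n) y, e.apply_eq_iff_eq]

lemma fixedPoints_iterate_succ_subset_range (σ : S → S) (n : ℕ) :
    fixedPoints σ^[n + 1] ⊆ range σ := fun x hx =>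
  ⟨σ^[n] x, by rw [← iterate_succ_apply' σ n x]; exact hx⟩

lemma ncard_fixedPoints_iterate_add_one (k : ℕ) [NeZero k] (n : ℕ) :
    (fixedPoints (· + 1 : ZMod k → ZMod k)^[n]).ncard = if k ∣ n then k else 0 := by
  have : fixedPoints (· + 1 : ZMod k → ZMod k)^[n] = if k ∣ n then univ else ∅ := by
    ext x
    simp only [mem_fixedPoints, IsFixedPt, add_right_iterate_apply, nsmul_one, add_eq_left,
      ZMod.natCast_eq_zero_iff]
    split_ifs with h <;> simp [h]
  rw [this]
  split_ifs <;> simp [ZMod.card]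

end FixedPoints

section FunMatrix

open Matrix

variable (R : Type*) [CommRing R] {S T : Type*} [DecidableEq S] [DecidableEq T]

def funMatrix (σ : S → S) : Matrix S S R := (1 : Matrix S S R).submatrix σ id

variable {R}

lemma funMatrix_apply (σ : S → S) (i j : S) :
    funMatrix R σ i j = if σ i = j then 1 else 0 :=
  one_apply

lemma submatrix_one_sub_smul_funMatrix {σ : S → S} {τ : T → T} {e : T → S}
    (he : Injective e) (h : Semiconj e τ σ) (z : R) :
    (1 - z • funMatrix R σ).submatrix e e = 1 - z • funMatrix R τ := by
  ext i j
  simp [funMatrix_apply, one_apply, he.eq_iff, ← h i]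

variable [Fintype S] [Fintype T]

lemma det_one_sub_smul_funMatrix_of_semiconj {σ : S → S} {τ : T → T} (e : T ≃ S)
    (h : Semiconj e τ σ) (z : R) :
    (1 - z • funMatrix R σ).det = (1 - z • funMatrix R τ).det := by
  rw [← det_submatrix_equiv_self e, submatrix_one_sub_smul_funMatrix e.injective h]

lemma det_one_sub_smul_funMatrix_of_mapsTo {σ : S → S} {s : Set S} [DecidablePred (· ∈ s)]
    (hs : MapsTo σ s s) (z : R) :
    (1 - z • funMatrix R σ).det = (1 - z • funMatrix R (hs.restrict σ s s)).det *
      ((1 - z • funMatrix R σ).submatrix ((↑) : ↥sᶜ → S) (↑)).det := by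
  rw [twoBlockTriangular_det' _ (· ∈ s)]
  · exact congrArg (· * _) <| congrArg det <|
      submatrix_one_sub_smul_funMatrix (τ := hs.restrict σ s s) Subtype.val_injective
        (fun _ => rfl) z
  · intro i hi j hj
    have hij : i ≠ j := fun h => hj (h ▸ hi)
    have hσ : σ i ≠ j := fun h => hj (h ▸ hs hi)
    simp [funMatrix_apply, one_apply, hij, hσ]

lemma det_one_sub_smul_funMatrix_of_mapsTo_compl {σ : S → S} {s : Set S}
    [DecidablePred (· ∈ s)] (hs : MapsTo σ s s) (hsc : MapsTo σ sᶜ sᶜ) (z : R) :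
    (1 - z • funMatrix R σ).det = (1 - z • funMatrix R (hs.restrict σ s s)).det *
      (1 - z • funMatrix R (hsc.restrict σ sᶜ sᶜ)).det := by
  rw [det_one_sub_smul_funMatrix_of_mapsTo hs, submatrix_one_sub_smul_funMatrix
    (τ := hsc.restrict σ sᶜ sᶜ) Subtype.val_injective (fun _ => rfl)]

lemma det_one_sub_smul_funMatrix_restrict_of_range_subset {σ : S → S} {s : Set S}
    [DecidablePred (· ∈ s)] (hs : range σ ⊆ s) (z : R) :
    (1 - z • funMatrix R σ).det =
      (1 - z • funMatrix R (((mapsTo_range σ s).mono_right hs).restrict σ s s)).det := by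
  have hcompl : (1 - z • funMatrix R σ).submatrix ((↑) : ↥sᶜ → S) ((↑) : ↥sᶜ → S) = 1 := by
    ext i j
    have hσ : σ i ≠ j := fun h => j.2 (hs ⟨i, h⟩)
    simp [funMatrix_apply, hσ, one_apply, Subtype.ext_iff]
  rw [det_one_sub_smul_funMatrix_of_mapsTo ((mapsTo_range σ s).mono_right hs), hcompl, det_one,
    mul_one]

lemma eq_one_or_eq_subRight_one {k : ℕ} [NeZero k] (hk : (1 : ZMod k) ≠ 0)
    {π : Equiv.Perm (ZMod k)} (h : ∀ i, π i = i ∨ π i + 1 = i) :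
    π = 1 ∨ π = Equiv.subRight 1 := by
  refine or_iff_not_imp_left.mpr fun hπ => ?_
  obtain ⟨j, hj⟩ : ∃ j, π j ≠ j := by
    by_contra! h'
    exact hπ (Equiv.ext h')
  have hstep (m : ℕ) : π (j - m) = j - m - 1 := by
    induction m with
    | zero => simpa [eq_sub_iff_add_eq] using (h j).resolve_left hj
    | succ m ih =>
      have hne : π (j - (m + 1 : ℕ)) ≠ j - (m + 1 : ℕ) := by
        intro hfix
        have := π.injective (hfix.trans (by rw [ih]; push_cast; ring))
        push_cast at this
        exact hk (by linear_combination -this)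
      rw [eq_sub_iff_add_eq]
      exact (h _).resolve_left hne
  ext x
  have := hstep (j - x).val
  simp only [ZMod.natCast_val, ZMod.cast_id', id, sub_sub_cancel] at this
  simp [this]

lemma sign_subRight_one (j : ℕ) :
    Equiv.Perm.sign (Equiv.subRight (1 : ZMod (j + 2))) = (-1) ^ (j + 1) := by
  have : Equiv.subRight (1 : ZMod (j + 2)) =
      (ZMod.finEquiv (j + 2)).toEquiv.permCongr (finRotate (j + 2)).symm := by
    ext i
    have : (finRotate (j + 2)).symm ((ZMod.finEquiv (j + 2)).symm i) =
        (ZMod.finEquiv (j + 2)).symm i - 1 := by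
      rw [Equiv.symm_apply_eq, finRotate_apply, sub_add_cancel]
    simp [Equiv.permCongr_apply, this]
  rw [this, Equiv.Perm.sign_permCongr, Equiv.Perm.sign_symm, sign_finRotate]
  rfl

lemma det_one_sub_smul_funMatrix_add_one (j : ℕ) (z : R) :
    (1 - z • funMatrix R (· + 1 : ZMod (j + 1) → ZMod (j + 1))).det = 1 - z ^ (j + 1) := by
  set M := 1 - z • funMatrix R (· + 1 : ZMod (j + 1) → ZMod (j + 1))
  have hM (a b) : M a b = (if a = b then 1 else 0) - z * if a + 1 = b then 1 else 0 := by
    simp [M, funMatrix_apply, one_apply]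
  rcases j with _ | j
  · have : Unique (ZMod (0 + 1)) := inferInstanceAs (Unique (ZMod 1))
    rw [det_unique, hM, if_pos rfl, if_pos (Subsingleton.elim _ _), zero_add, pow_one, mul_one]
  have : Fact (1 < j + 2) := ⟨by omega⟩
  have hk : (1 : ZMod (j + 2)) ≠ 0 := one_ne_zero
  -- Only the identity and the rotation `i ↦ i - 1` contribute to the Leibniz expansion.
  have hvanish (π : Equiv.Perm (ZMod (j + 2))) (_ : π ∈ Finset.univ)
      (hπ : π ∉ ({1, Equiv.subRight 1} : Finset _)) :
      Equiv.Perm.sign π • ∏ i, M (π i) i = 0 := by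
    simp only [Finset.mem_insert, Finset.mem_singleton, not_or] at hπ
    obtain ⟨i, hi⟩ : ∃ i, ¬ (π i = i ∨ π i + 1 = i) := by
      by_contra! h'
      exact (eq_one_or_eq_subRight_one hk h').elim hπ.1 hπ.2
    push Not at hi
    rw [Finset.prod_eq_zero (Finset.mem_univ i) (by simp [hM, hi.1, hi.2]), smul_zero]
  have hne : (1 : Equiv.Perm (ZMod (j + 2))) ≠ Equiv.subRight 1 := fun h =>
    hk (by simpa using congrArg (· 0) h)
  have hdiag : ∏ i, M i i = 1 := Finset.prod_eq_one fun i _ => by simp [hM]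
  have hsub : ∏ i, M (Equiv.subRight 1 i) i = (-z) ^ (j + 2) := by
    rw [Finset.prod_congr rfl fun i _ => ?_, Finset.prod_const, Finset.card_univ, ZMod.card]
    simp [hM]
  rw [det_apply, ← Finset.sum_subset (Finset.subset_univ _) hvanish, Finset.sum_pair hne]
  simp only [Equiv.Perm.one_apply, hdiag, hsub, sign_subRight_one, Equiv.Perm.sign_one, one_smul,
    Units.smul_def, Units.val_pow_eq_pow_val, Units.val_neg, Units.val_one, zsmul_eq_mul]
  push_cast
  rw [neg_pow z, ← mul_assoc, ← pow_add, Odd.neg_one_pow ⟨j + 1, by ring⟩]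
  ring

lemma toMatrix'_funLeft (σ : S → S) :
    LinearMap.toMatrix' (LinearMap.funLeft R R σ) = funMatrix R σ := by
  ext i j
  simp [LinearMap.toMatrix'_apply, funMatrix_apply, Pi.single_apply]

lemma det_id_sub_smul_funLeft (σ : S → S) (z : R) :
    LinearMap.det (LinearMap.id - z • LinearMap.funLeft R R σ) =
      (1 - z • funMatrix R σ).det := by
  rw [← LinearMap.det_toMatrix', map_sub, map_smul, LinearMap.toMatrix'_id, toMatrix'_funLeft]

end FunMatrix

section LogZeta

noncomputable def logZeta (a : ℕ → ℕ) (z : ℂ) : ℂ :=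
  ∑' n : ℕ, (a (n + 1) : ℂ) * z ^ (n + 1) / (n + 1)

lemma summable_logZeta {a : ℕ → ℕ} {N : ℕ} (ha : ∀ n, a n ≤ N) {z : ℂ} (hz : ‖z‖ < 1) :
    Summable fun n : ℕ => (a (n + 1) : ℂ) * z ^ (n + 1) / (n + 1) := by
  refine .of_norm_bounded ((summable_geometric_of_lt_one (norm_nonneg z) hz).mul_left (N : ℝ))
    fun n => ?_
  have hn : ‖(n : ℂ) + 1‖ = n + 1 := by exact_mod_cast Complex.norm_natCast (n + 1)
  rw [norm_div, norm_mul, norm_pow, Complex.norm_natCast, hn, pow_succ]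
  have : (a (n + 1) : ℝ) ≤ N := by exact_mod_cast ha (n + 1)
  calc (a (n + 1) : ℝ) * (‖z‖ ^ n * ‖z‖) / (n + 1) ≤ (a (n + 1) : ℝ) * (‖z‖ ^ n * ‖z‖) :=
        div_le_self (by positivity) (by linarith [(n.cast_nonneg : (0 : ℝ) ≤ n)])
    _ ≤ N * ‖z‖ ^ n := by
        gcongr
        exact mul_le_of_le_one_right (by positivity) hz.le

lemma logZeta_add {a b c : ℕ → ℕ} {N : ℕ} (hb : ∀ n, b n ≤ N) (hc : ∀ n, c n ≤ N)
    (h : ∀ n, a n = b n + c n) {z : ℂ} (hz : ‖z‖ < 1) :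
    logZeta a z = logZeta b z + logZeta c z := by
  rw [logZeta, logZeta, logZeta, ← (summable_logZeta hb hz).tsum_add (summable_logZeta hc hz)]
  congr! 2 with n
  rw [h]
  push_cast
  ring

lemma exp_logZeta_cycle {k : ℕ} (hk : k ≠ 0) {z : ℂ} (hz : ‖z‖ < 1) :
    exp (logZeta (fun n => if k ∣ n then k else 0) z) * (1 - z ^ k) = 1 := by
  obtain ⟨j, rfl⟩ := Nat.exists_eq_succ_of_ne_zero hk
  have hw : ‖z ^ (j + 1)‖ < 1 := by
    rw [norm_pow]; exact pow_lt_one₀ (norm_nonneg z) hz (Nat.succ_ne_zero j)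
  have hι (m : ℕ) : (j + 1) * m + j + 1 = (j + 1) * (m + 1) := by ring
  -- Only the terms with `n + 1 = (j + 1) * (m + 1)` survive, and they form the series of
  -- `-log (1 - z ^ (j + 1))`.
  have hsum : HasSum (fun n : ℕ => ((if j + 1 ∣ n + 1 then j + 1 else 0 : ℕ) : ℂ) *
      z ^ (n + 1) / (n + 1)) (-log (1 - z ^ (j + 1))) := by
    have hinj : Injective fun m => (j + 1) * m + j := fun m m' h => by simpa using h
    refine (hinj.hasSum_iff fun n hn => ?_).mp ?_
    · rw [if_neg, Nat.cast_zero, zero_mul, zero_div]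
      rintro ⟨m, hm⟩
      obtain ⟨m, rfl⟩ := Nat.exists_eq_succ_of_ne_zero (n := m) (by rintro rfl; simp at hm)
      exact hn ⟨m, by linarith [hι m]⟩
    · convert hasSum_taylorSeries_neg_log' hw using 2 with m
      have hden : (((j + 1) * m + j : ℕ) : ℂ) + 1 = ((j + 1 : ℕ) : ℂ) * (m + 1) := by
        push_cast; ring
      simp only [comp_apply, hι, dvd_mul_right, if_true, hden, pow_mul]
      exact mul_div_mul_left _ _ (Nat.cast_ne_zero.mpr hk)
  have hne : 1 - z ^ (j + 1) ≠ 0 := fun h => by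
    simp [← sub_eq_zero.mp h] at hw
  rw [logZeta, hsum.tsum_eq, exp_neg, exp_log hne, inv_mul_cancel₀ hne]

end LogZeta

section ArtinMazur

open MulAction Subgroup

variable {S T : Type*}

noncomputable def artinMazurZeta (σ : S → S) (z : ℂ) : ℂ :=
  exp (logZeta (fun n => (fixedPoints σ^[n]).ncard) z)

lemma artinMazurZeta_of_semiconj {σ : S → S} {τ : T → T} (e : T ≃ S) (h : Semiconj e τ σ)
    (z : ℂ) : artinMazurZeta σ z = artinMazurZeta τ z := by
  simp only [artinMazurZeta, ncard_fixedPoints_iterate_of_semiconj e h]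

lemma artinMazurZeta_restrict_of_range_subset {σ : S → S} {s : Set S} (hs : range σ ⊆ s)
    (z : ℂ) :
    artinMazurZeta σ z =
      artinMazurZeta (((mapsTo_range σ s).mono_right hs).restrict σ s s) z := by
  simp only [artinMazurZeta, logZeta, ncard_fixedPoints_iterate_restrict,
    inter_eq_left.mpr ((fixedPoints_iterate_succ_subset_range σ _).trans hs)]

lemma artinMazurZeta_eq_mul_of_mapsTo_compl [Finite S] {σ : S → S} {s : Set S}
    (hs : MapsTo σ s s) (hsc : MapsTo σ sᶜ sᶜ) {z : ℂ} (hz : ‖z‖ < 1) :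
    artinMazurZeta σ z =
      artinMazurZeta (hs.restrict σ s s) z * artinMazurZeta (hsc.restrict σ sᶜ sᶜ) z := by
  simp only [artinMazurZeta, ← exp_add, ncard_fixedPoints_iterate_restrict]
  congr 1
  refine logZeta_add (N := Nat.card S) (fun n => ncard_le_card _) (fun n => ncard_le_card _)
    (fun n => ?_) hz
  rw [← sdiff_eq, ncard_inter_add_ncard_sdiff_eq_ncard]

lemma artinMazurZeta_add_one_mul_det (k : ℕ) [NeZero k] {z : ℂ} (hz : ‖z‖ < 1) :
    artinMazurZeta (· + 1 : ZMod k → ZMod k) z *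
      (1 - z • funMatrix ℂ (· + 1 : ZMod k → ZMod k)).det = 1 := by
  obtain ⟨j, rfl⟩ := Nat.exists_eq_succ_of_ne_zero (NeZero.ne k)
  rw [artinMazurZeta, funext (ncard_fixedPoints_iterate_add_one (j + 1)),
    det_one_sub_smul_funMatrix_add_one]
  exact_mod_cast exp_logZeta_cycle (Nat.succ_ne_zero j) hz

lemma artinMazurZeta_mul_det_of_semiconj_add_one [Fintype T] [DecidableEq T] {τ : T → T}
    {k : ℕ} [NeZero k] (e : ZMod k ≃ T) (h : Semiconj e (· + 1) τ) {z : ℂ} (hz : ‖z‖ < 1) :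
    artinMazurZeta τ z * (1 - z • funMatrix ℂ τ).det = 1 := by
  rw [artinMazurZeta_of_semiconj e h, det_one_sub_smul_funMatrix_of_semiconj e h]
  exact artinMazurZeta_add_one_mul_det k hz

lemma semiconj_orbitZPowersEquiv_symm (π : Equiv.Perm S) (x : S)
    (hs : MapsTo π (orbit (zpowers π) x) (orbit (zpowers π) x)) :
    Semiconj (orbitZPowersEquiv π x).symm (· + 1) (hs.restrict π _ _) := by
  intro i
  obtain ⟨n, rfl⟩ : ∃ n : ℤ, (n : ZMod (minimalPeriod (π • ·) x)) = i :=
    ⟨_, ZMod.intCast_zmod_cast i⟩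
  have h1 : (n : ZMod (minimalPeriod (π • ·) x)) + 1 = ((1 + n : ℤ) : ZMod _) := by
    push_cast; ring
  apply Subtype.ext
  simp only [MapsTo.val_restrict_apply, h1, orbitZPowersEquiv_symm_apply', zpow_one_add,
    mul_smul]
  rfl

theorem artinMazurZeta_mul_det [Fintype S] [DecidableEq S] (σ : S → S) {z : ℂ}
    (hz : ‖z‖ < 1) : artinMazurZeta σ z * (1 - z • funMatrix ℂ σ).det = 1 := by
  induction h : Nat.card S using Nat.strong_induction_on generalizing S with
  | _ N ih =>
  classical
  have ih' (s : Set S) [Fintype s] (hs : s ≠ univ) (τ : s → s) :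
      artinMazurZeta τ z * (1 - z • funMatrix ℂ τ).det = 1 :=
    ih _ (h ▸ (Nat.card_coe_set_eq s).trans_lt (ncard_lt_card hs)) τ rfl
  by_cases hσ : Surjective σ
  · rcases isEmpty_or_nonempty S with hS | ⟨⟨x⟩⟩
    · simp [artinMazurZeta, logZeta, Set.eq_empty_of_isEmpty, Matrix.det_isEmpty]
    obtain ⟨π, rfl⟩ : ∃ π : Equiv.Perm S, ⇑π = σ :=
      ⟨.ofBijective σ ⟨Finite.injective_iff_surjective.mpr hσ, hσ⟩, rfl⟩
    set s := orbit (zpowers π) x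
    have hmem (y : S) : π y ∈ s ↔ y ∈ s := by
      rw [← orbit_eq_iff, ← orbit_eq_iff, ← orbit_smul (⟨π, mem_zpowers π⟩ : zpowers π) y]
      rfl
    have hs : MapsTo π s s := fun y => (hmem y).mpr
    have hsc : MapsTo π sᶜ sᶜ := fun y => mt (hmem y).mp
    rw [artinMazurZeta_eq_mul_of_mapsTo_compl hs hsc hz,
      det_one_sub_smul_funMatrix_of_mapsTo_compl hs hsc, mul_mul_mul_comm,
      artinMazurZeta_mul_det_of_semiconj_add_one _ (semiconj_orbitZPowersEquiv_symm π x hs) hz,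
      ih' sᶜ (fun hu => (hu ▸ mem_univ x : x ∈ sᶜ) (mem_orbit_self x)), one_mul]
  · rw [artinMazurZeta_restrict_of_range_subset subset_rfl,
      det_one_sub_smul_funMatrix_restrict_of_range_subset subset_rfl]
    -- `convert` reconciles two different `Fintype (range σ)` instances.
    convert ih' (range σ) (mt range_eq_univ.mp hσ) _

end ArtinMazur

section ClassFunctions

noncomputable def classFunctionsEquiv (F : Type*) [Group F] :
    (ConjClasses F → ℂ) ≃ₗ[ℂ] classFunctions F :=
  .ofBijective ((LinearMap.funLeft ℂ ℂ ConjClasses.mk).codRestrict (classFunctions F)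
      fun h g x => congrArg h (ConjClasses.mk_eq_mk_iff_isConj.mpr (isConj_iff.mpr ⟨x, rfl⟩).symm))
    ⟨fun _ _ h => LinearMap.funLeft_injective_of_surjective _ _ _ ConjClasses.mk_surjective
        (congrArg Subtype.val h),
      fun f => ⟨fun c => f.1 (Quotient.out c), Subtype.ext <| funext fun g => by
        obtain ⟨c, hc⟩ := isConj_iff.mp
          (ConjClasses.mk_eq_mk_iff_isConj.mp (Quotient.out_eq (ConjClasses.mk g)))
        exact (f.2 _ c).symm.trans (congrArg f.1 hc)⟩⟩

variable {F : Type*} [Group F]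

lemma classFunctionsEquiv_conj_funLeft (φ : F →* F) :
    (classFunctionsEquiv F).conj (LinearMap.funLeft ℂ ℂ (ConjClasses.map φ)) =
      classFunMap φ := by
  refine LinearMap.ext fun f => ?_
  obtain ⟨h, rfl⟩ := (classFunctionsEquiv F).surjective f
  rw [LinearEquiv.conj_apply_apply, LinearEquiv.symm_apply_apply]
  rfl

lemma det_id_sub_smul_classFunMap [Fintype (ConjClasses F)] [DecidableEq (ConjClasses F)]
    (φ : F →* F) (z : ℂ) :
    LinearMap.det (LinearMap.id - z • classFunMap φ) =
      (1 - z • funMatrix ℂ (ConjClasses.map φ)).det := by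
  have : LinearMap.id - z • classFunMap φ = (classFunctionsEquiv F).conj
      (LinearMap.id - z • LinearMap.funLeft ℂ ℂ (ConjClasses.map φ)) := by
    rw [map_sub, map_smul, LinearEquiv.conj_id, classFunctionsEquiv_conj_funLeft]
  rw [this, LinearEquiv.conj_apply, LinearMap.comp_assoc, LinearMap.det_conj,
    det_id_sub_smul_funLeft]

end ClassFunctions

theorem reidemeister_zeta_of_finite_group_rational
    {F : Type*} [Group F] [Fintype F] (φ : F →* F) :
    ∀ z : ℂ, ‖z‖ < 1 →
      Complex.exp (∑' n : ℕ,
          (reidNum ((⇑φ)^[n + 1]) : ℂ) * z ^ (n + 1) / (n + 1))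
        = (LinearMap.det (LinearMap.id - z • classFunMap φ))⁻¹ := by
  classical
  intro z hz
  have := Fintype.ofFinite (ConjClasses F)
  have hzeta : Complex.exp (∑' n : ℕ, (reidNum ((⇑φ)^[n + 1]) : ℂ) * z ^ (n + 1) / (n + 1)) =
      artinMazurZeta (ConjClasses.map φ) z := by
    simp only [artinMazurZeta, logZeta, reidNum_iterate]
  rw [hzeta, det_id_sub_smul_classFunMap]
  exact eq_inv_of_mul_eq_one_left (artinMazurZeta_mul_det _ hz)
end

section
/- Let F be a nontrivial finite group, Γ = ⊕_{i∈ℤ} F the restricted direct sum (direct sum) of copies of F indexed by ℤ, and φ : Γ → Γ the right shift automorphism, (φ(g))_i = g_{i−1}. Then the Reidemeister number of φ equals |F|: R(φ) = |F|. -/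
/-!
The complete invariant of a twisted class is the ordered product `⋯ a₂ a₁ a₀ a₋₁ ⋯` of the
coordinates, taken from the top of the support down. Twisting by `x` changes the coordinates to
`xᵢ aᵢ xᵢ₋₁⁻¹`, so this product telescopes to itself. Conversely, writing `sᵢ` for the product
of the coordinates above `i`, the element `x` equal to `sᵢ` for `i ≥ 0` and to `c⁻¹ sᵢ` for
`i < 0`, where `c` is the total product, is finitely supported and twists `a` to the element
with `c` at `0` and `1` elsewhere.
-/

variable (F : Type*) [Group F]

/-- The restricted direct product `⊕_{i∈ℤ} F`: finitely supported functions `ℤ → F`,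
as a subgroup of the full product. -/
def DirSum : Subgroup (ℤ → F) where
  carrier := {g | (Function.mulSupport g).Finite}
  mul_mem' := by
    intro a b ha hb
    exact ((ha.union hb).subset (Function.mulSupport_mul a b))
  one_mem' := by
    simp [Function.mulSupport_one]
  inv_mem' := by
    intro a ha
    simpa [Function.mulSupport_inv] using ha

/-- The right shift automorphism `(φ g)_i = g_{i-1}` on `⊕_{i∈ℤ} F`. -/
def shiftHom : DirSum F →* DirSum F where
  toFun g := ⟨fun i => g.1 (i - 1), by
    have : Function.mulSupport (fun i => g.1 (i - 1)) ⊆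
        (fun t => t + 1) '' Function.mulSupport g.1 := by
      intro i hi
      exact ⟨i - 1, hi, by ring⟩
    exact (g.2.image _).subset this⟩
  map_one' := rfl
  map_mul' := by intros; rfl

section TwistedClass

variable {G : Type*} [Group G] (φ : G →* G)

def twistedClass (g : G) : Set G := {h | ∃ x : G, h = x * g * (φ x)⁻¹}

lemma mem_twistedClass_self (g : G) : g ∈ twistedClass φ g := ⟨1, by simp⟩

lemma twistedClass_eq_of_mem {a b : G} (h : b ∈ twistedClass φ a) :
    twistedClass φ b = twistedClass φ a := by
  obtain ⟨x, rfl⟩ := h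
  ext z
  constructor
  · rintro ⟨y, rfl⟩
    exact ⟨y * x, by simp [mul_assoc]⟩
  · rintro ⟨y, rfl⟩
    exact ⟨y * x⁻¹, by simp [mul_assoc]⟩

theorem card_range_twistedClass_eq {X : Type*} (Φ : G → X) (ι : X → G)
    (hΦ : ∀ x a, Φ (x * a * (φ x)⁻¹) = Φ a) (hΦι : ∀ c, Φ (ι c) = c)
    (hι : ∀ a, ι (Φ a) ∈ twistedClass φ a) :
    Nat.card (Set.range (twistedClass φ)) = Nat.card X := by
  let classOf : X → Set.range (twistedClass φ) := fun c => ⟨twistedClass φ (ι c), ι c, rfl⟩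
  have injective : Function.Injective classOf := by
    intro c c' hcc'
    have hclass : twistedClass φ (ι c) = twistedClass φ (ι c') := congrArg Subtype.val hcc'
    have hmem : ι c' ∈ twistedClass φ (ι c) := by
      rw [hclass]
      exact mem_twistedClass_self φ (ι c')
    obtain ⟨x, hx⟩ := hmem
    rw [← hΦι c, ← hΦι c', hx, hΦ]
  have surjective : Function.Surjective classOf := by
    rintro ⟨_, a, rfl⟩
    exact ⟨Φ a, Subtype.ext (twistedClass_eq_of_mem φ (hι a))⟩
  exact (Nat.card_congr (Equiv.ofBijective classOf ⟨injective, surjective⟩)).symm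

end TwistedClass

section DescProd

variable {G : Type*} [Group G]

/-- `descProd a n k = a n * a (n - 1) * ⋯ * a (n - k + 1)`. -/
def descProd (a : ℤ → G) (n : ℤ) : ℕ → G
  | 0 => 1
  | k + 1 => descProd a n k * a (n - k)

lemma descProd_twist (x a : ℤ → G) (n : ℤ) :
    ∀ k : ℕ, descProd (fun i => x i * a i * (x (i - 1))⁻¹) n k =
      x n * descProd a n k * (x (n - k))⁻¹
  | 0 => by simp [descProd]
  | k + 1 => by
    have hk : n - (k + 1 : ℕ) = n - k - 1 := by push_cast; ring
    simp only [descProd, descProd_twist x a n k, hk]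
    group

lemma descProd_succ_succ_of_eq_one (a : ℤ → G) (n : ℤ) (h : a (n + 1) = 1) :
    ∀ k : ℕ, descProd a (n + 1) (k + 1) = descProd a n k
  | 0 => by simp [descProd, h]
  | k + 1 => by
    have hk : n + 1 - (k + 1 : ℕ) = n - k := by push_cast; ring
    rw [descProd, descProd_succ_succ_of_eq_one a n h k, hk, descProd]

lemma descProd_add_of_eq_one (a : ℤ → G) (n : ℤ) (k : ℕ) :
    ∀ m : ℕ, (∀ j : ℕ, j < m → a (n - k - j) = 1) → descProd a n (k + m) = descProd a n k
  | 0, _ => rfl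
  | m + 1, h => by
    have hk : n - (k + m : ℕ) = n - k - m := by push_cast; ring
    rw [← add_assoc, descProd, hk, h m (by omega), mul_one,
      descProd_add_of_eq_one a n k m fun j hj => h j (by omega)]

variable {a : ℤ → G} {N : ℕ}

lemma descProd_eq_of_le (ha : ∀ i : ℤ, N < i.natAbs → a i = 1) {M : ℕ} (hNM : N ≤ M) :
    descProd a M (2 * M + 1) = descProd a N (2 * N + 1) := by
  induction M, hNM using Nat.le_induction with
  | base => rfl
  | succ M hNM ih =>
    have htop : a ((M : ℤ) + 1) = 1 := ha _ (by omega)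
    have hbot : a ((M : ℤ) - (2 * M + 1 : ℕ)) = 1 := ha _ (by omega)
    have hk : 2 * (M + 1) + 1 = 2 * M + 1 + 1 + 1 := by omega
    rw [Nat.cast_succ, hk, descProd_succ_succ_of_eq_one a M htop, descProd, hbot, mul_one, ih]

lemma descProd_eq_of_bounds (ha : ∀ i : ℤ, N < i.natAbs → a i = 1) {M : ℕ}
    (ha' : ∀ i : ℤ, M < i.natAbs → a i = 1) :
    descProd a M (2 * M + 1) = descProd a N (2 * N + 1) := by
  rcases le_total N M with h | h
  · exact descProd_eq_of_le ha h
  · exact (descProd_eq_of_le ha' h).symm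

-- `descProd a N (N - i).toNat = a N * ⋯ * a (i + 1)`, the empty product for `i ≥ N`.
lemma descProd_toNat_sub_sub_one (ha : ∀ i : ℤ, N < i → a i = 1) (i : ℤ) :
    descProd a N (N - (i - 1)).toNat = descProd a N (N - i).toNat * a i := by
  by_cases hi : i ≤ N
  · have hk : (N - (i - 1)).toNat = (N - i).toNat + 1 := by omega
    have hi' : (N : ℤ) - (N - i).toNat = i := by omega
    rw [hk, descProd, hi']
  · have hk : (N - (i - 1)).toNat = 0 := by omega
    have hk' : (N - i).toNat = 0 := by omega
    rw [hk, hk', ha i (by omega), mul_one]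

lemma descProd_toNat_sub_of_lt (ha : ∀ i : ℤ, N < i.natAbs → a i = 1) {i : ℤ}
    (hi : i < -N) : descProd a N (N - i).toNat = descProd a N (2 * N + 1) := by
  have hk : (N - i).toNat = 2 * N + 1 + (-N - 1 - i).toNat := by omega
  rw [hk]
  exact descProd_add_of_eq_one a N _ _ fun j hj => ha _ (by omega)

end DescProd

lemma twist_eq_mulSingle_of_sub_one {G : Type*} [Group G] {a s : ℤ → G}
    (hs : ∀ i, s (i - 1) = s i * a i) (c : G) (i : ℤ) :
    (if 0 ≤ i then s i else c⁻¹ * s i) * a i *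
      (if 0 ≤ i - 1 then s (i - 1) else c⁻¹ * s (i - 1))⁻¹ = (Pi.mulSingle 0 c : ℤ → G) i := by
  rcases lt_trichotomy i 0 with hi | rfl | hi
  · simp only [if_neg (by omega : ¬0 ≤ i), if_neg (by omega : ¬0 ≤ i - 1), hs,
      Pi.mulSingle_eq_of_ne hi.ne]
    group
  · simp only [le_refl, if_true, if_neg (by omega : ¬(0 : ℤ) ≤ 0 - 1), hs, Pi.mulSingle_eq_same]
    group
  · simp only [if_pos hi.le, if_pos (by omega : 0 ≤ i - 1), hs, Pi.mulSingle_eq_of_ne hi.ne']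
    group

namespace DirSum

variable {G : Type*} [Group G]

lemma coe_twist (x a : DirSum G) :
    ((x * a * (shiftHom G x)⁻¹ : DirSum G) : ℤ → G) = fun i => x.1 i * a.1 i * (x.1 (i - 1))⁻¹ :=
  rfl

lemma exists_natAbs_bound (a : DirSum G) : ∃ N : ℕ, ∀ i : ℤ, N < i.natAbs → a.1 i = 1 := by
  obtain ⟨N, hN⟩ := (a.2.image Int.natAbs).bddAbove
  refine ⟨N, fun i hi => ?_⟩
  by_contra hai
  exact (hN ⟨i, hai, rfl⟩).not_gt hi

noncomputable def totalProd (a : DirSum G) : G :=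
  descProd a.1 (exists_natAbs_bound a).choose (2 * (exists_natAbs_bound a).choose + 1)

lemma descProd_eq_totalProd (a : DirSum G) {N : ℕ} (ha : ∀ i : ℤ, N < i.natAbs → a.1 i = 1) :
    descProd a.1 N (2 * N + 1) = totalProd a :=
  descProd_eq_of_bounds (exists_natAbs_bound a).choose_spec ha

lemma totalProd_twist (x a : DirSum G) : totalProd (x * a * (shiftHom G x)⁻¹) = totalProd a := by
  obtain ⟨Na, ha⟩ := exists_natAbs_bound a
  obtain ⟨Nx, hx⟩ := exists_natAbs_bound x
  set N := max Na Nx + 1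
  have hb : ∀ i : ℤ, N < i.natAbs → (x * a * (shiftHom G x)⁻¹).1 i = 1 := fun i hi => by
    simp only [coe_twist, hx i (by omega), ha i (by omega), hx (i - 1) (by omega)]
    group
  rw [← descProd_eq_totalProd _ hb, ← descProd_eq_totalProd a (N := N) fun i hi => ha i (by omega),
    coe_twist, descProd_twist, hx _ (by omega), hx _ (by omega)]
  group

def mulSingle (i : ℤ) (c : G) : DirSum G :=
  ⟨Pi.mulSingle i c, (Set.finite_singleton i).subset Pi.mulSupport_mulSingle_subset⟩

@[simp]
lemma coe_mulSingle (i : ℤ) (c : G) : (mulSingle i c : ℤ → G) = Pi.mulSingle i c := rfl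

lemma totalProd_mulSingle_zero (c : G) : totalProd (mulSingle 0 c) = c := by
  have hc : ∀ i : ℤ, 0 < i.natAbs → (mulSingle 0 c).1 i = 1 := fun i hi => by
    simp [show i ≠ 0 by omega]
  rw [← descProd_eq_totalProd _ hc]
  simp [descProd]

lemma mulSingle_totalProd_mem_twistedClass (a : DirSum G) :
    mulSingle 0 (totalProd a) ∈ twistedClass (shiftHom G) a := by
  obtain ⟨N, ha⟩ := exists_natAbs_bound a
  set c := totalProd a
  set s : ℤ → G := fun i => descProd a.1 N (N - i).toNat
  have hs : ∀ i, s (i - 1) = s i * a.1 i :=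
    descProd_toNat_sub_sub_one fun i hi => ha i (by omega)
  set x : ℤ → G := fun i => if 0 ≤ i then s i else c⁻¹ * s i
  have hx : (Function.mulSupport x).Finite := by
    refine (Set.finite_Ico (-N : ℤ) N).subset fun i hi => Set.mem_Ico.mpr ⟨?_, ?_⟩
    · by_contra! hlt
      apply hi
      simp only [x, s, if_neg (by omega : ¬0 ≤ i), descProd_toNat_sub_of_lt ha hlt,
        descProd_eq_totalProd a ha, c, inv_mul_cancel]
    · by_contra! hge
      apply hi
      simp only [x, s, if_pos (by omega : 0 ≤ i), (by omega : (N - i).toNat = 0), descProd]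
  refine ⟨⟨x, hx⟩, Subtype.ext ?_⟩
  rw [coe_twist]
  funext i
  exact (twist_eq_mulSingle_of_sub_one hs c i).symm

end DirSum

theorem reidemeister_number_of_shift_general
    (F : Type*) [Group F] :
    Nat.card (Set.range fun g : DirSum F =>
        {h : DirSum F | ∃ x : DirSum F, h = x * g * (shiftHom F x)⁻¹})
      = Nat.card F :=
  card_range_twistedClass_eq (shiftHom F) DirSum.totalProd (DirSum.mulSingle 0)
    DirSum.totalProd_twist DirSum.totalProd_mulSingle_zero
    DirSum.mulSingle_totalProd_mem_twistedClass

theorem reidemeister_number_of_shift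
    (F : Type*) [Group F] [Finite F] [Nontrivial F] :
    Nat.card (Set.range fun g : DirSum F =>
        {h : DirSum F | ∃ x : DirSum F, h = x * g * (shiftHom F x)⁻¹})
      = Nat.card F :=
  reidemeister_number_of_shift_general F
end
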